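/- arXiv:2101.08425 — 6 statements merged into one kernel-verified Lean document; each statement's English description precedes it below -/
import Mathlib

section
/- Let m ≥ 1 and let f : F_{2^m} → F_{2^m} be an almost bent function (i.e. for all a ∈ F_{2^m}*, b ∈ F_{2^m}, the Walsh sum W_f(a,b) = Σ_{x} (-1)^{Tr(a f(x) + b x)} lies in {0, 2^{(m+1)/2}, -2^{(m+1)/2}}). Then f is almost perfect nonlinear: for every a ∈ F_{2^m}* and b ∈ F_{2^m}, the equation f(x+a) + f(x) = b has at most 2 solutions x ∈ F_{2^m}. -/
open Finset
open scoped Classical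

noncomputable instance (m : ℕ) : Fintype (GaloisField 2 m) := Fintype.ofFinite _

/-- Absolute trace from `GF(2^m)` to `F_2`. -/
noncomputable def Tr (m : ℕ) : GaloisField 2 m → ZMod 2 :=
  Algebra.trace (ZMod 2) (GaloisField 2 m)

/-- Walsh transform `W_f(a,b) = Σ_x (-1)^{Tr(a f(x) + b x)}`. -/
noncomputable def Walsh (m : ℕ) (f : GaloisField 2 m → GaloisField 2 m)
    (a b : GaloisField 2 m) : ℤ :=
  ∑ x : GaloisField 2 m, (-1 : ℤ) ^ (Tr m (a * f x + b * x)).val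

section AuxAB

variable (m : ℕ)

local notation "K" => GaloisField 2 m

/-- The additive character `t ↦ (-1)^{Tr t}`. -/
noncomputable def chiAB (t : K) : ℤ := (-1) ^ (Tr m t).val

lemma chiAB_mul (s t : K) : chiAB m s * chiAB m t = chiAB m (s + t) := by
  unfold chiAB
  rw [show Tr m (s + t) = Tr m s + Tr m t from map_add (Algebra.trace (ZMod 2) K) s t]
  revert s t
  have h : ∀ u v : ZMod 2, (-1:ℤ) ^ u.val * (-1:ℤ) ^ v.val = (-1:ℤ) ^ (u + v).val := by decide
  intro s t; exact h _ _

lemma chiAB_zero : chiAB m 0 = 1 := by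
  unfold chiAB
  rw [show Tr m 0 = 0 from map_zero (Algebra.trace (ZMod 2) K)]
  simp

lemma two_eq_zeroK (u : K) : u + u = 0 := CharTwo.add_self_eq_zero u

lemma add_eq_zero_iffK (u v : K) : u + v = 0 ↔ v = u := by
  constructor
  · intro h
    have := add_eq_zero_iff_eq_neg.mp h
    rw [CharTwo.neg_eq] at this
    exact this.symm
  · rintro rfl; exact two_eq_zeroK m _

lemma cardK (hm : m ≠ 0) : Fintype.card K = 2 ^ m := by
  rw [← Nat.card_eq_fintype_card]; exact GaloisField.card 2 m hm

lemma sum_chiAB (hm : m ≠ 0) (t : K) :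
    ∑ α : K, chiAB m (α * t) = if t = 0 then (2:ℤ) ^ m else 0 := by
  split_ifs with h
  · subst h
    simp only [mul_zero, chiAB_zero, Finset.sum_const, card_univ, nsmul_eq_mul, mul_one]
    rw [cardK m hm]; push_cast; ring
  · have h1 : ∑ α : K, chiAB m (α * t) = ∑ β : K, chiAB m β :=
      Fintype.sum_equiv (Equiv.mulRight₀ t h) _ _ (fun α => rfl)
    rw [h1]
    obtain ⟨β0, hβ0⟩ := Algebra.trace_surjective (ZMod 2) K 1
    have hχ : chiAB m β0 = -1 := by
      show ((-1:ℤ)) ^ (Tr m β0).val = -1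
      rw [show Tr m β0 = 1 from hβ0, ZMod.val_one]
      norm_num
    have h2 : ∑ β : K, chiAB m (β + β0) = ∑ β : K, chiAB m β :=
      Fintype.sum_equiv (Equiv.addRight β0) _ _ (fun β => rfl)
    have h3 : ∑ β : K, chiAB m (β + β0) = - ∑ β : K, chiAB m β := by
      rw [← Finset.sum_neg_distrib]
      refine Finset.sum_congr rfl fun β _ => ?_
      rw [← chiAB_mul, hχ]; ring
    have := h2.symm.trans h3
    linarith

lemma walsh_eq (f : K → K) (a b : K) :
    Walsh m f a b = ∑ x : K, chiAB m (a * f x + b * x) := rfl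

lemma walsh_zero_left (hm : m ≠ 0) (f : K → K) (b : K) :
    Walsh m f 0 b = if b = 0 then (2:ℤ) ^ m else 0 := by
  rw [walsh_eq]
  have : ∀ x : K, chiAB m (0 * f x + b * x) = chiAB m (x * b) := by
    intro x; congr 1; ring
  rw [Finset.sum_congr rfl fun x _ => this x]
  exact sum_chiAB m hm b

lemma walsh_sq (f : K → K) (a b : K) :
    Walsh m f a b * Walsh m f a b
      = ∑ q : K × K, chiAB m (a * (f q.1 + f q.2)) * chiAB m (b * (q.1 + q.2)) := by
  rw [walsh_eq, Fintype.sum_mul_sum, Fintype.sum_prod_type]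
  refine Finset.sum_congr rfl fun x _ => Finset.sum_congr rfl fun y _ => ?_
  rw [chiAB_mul, chiAB_mul]
  congr 1; ring

lemma parseval (hm : m ≠ 0) (f : K → K) (a : K) :
    ∑ b : K, Walsh m f a b * Walsh m f a b = (2:ℤ) ^ m * 2 ^ m := by
  simp_rw [walsh_sq]
  rw [Finset.sum_comm]
  have hinner : ∀ q : K × K,
      ∑ b : K, chiAB m (a * (f q.1 + f q.2)) * chiAB m (b * (q.1 + q.2))
        = chiAB m (a * (f q.1 + f q.2)) * (if q.1 + q.2 = 0 then (2:ℤ)^m else 0) := by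
    intro q
    rw [← Finset.mul_sum, sum_chiAB m hm]
  rw [Finset.sum_congr rfl fun q _ => hinner q]
  have hterm : ∀ q : K × K,
      chiAB m (a * (f q.1 + f q.2)) * (if q.1 + q.2 = 0 then (2:ℤ)^m else 0)
        = if q.2 = q.1 then chiAB m (a * (f q.1 + f q.2)) * (2:ℤ)^m else 0 := by
    intro q
    rw [add_eq_zero_iffK]
    split_ifs <;> ring
  rw [Finset.sum_congr rfl fun q _ => hterm q, Fintype.sum_prod_type]
  have hx : ∀ x : K,
      (∑ y : K, if y = x then chiAB m (a * (f x + f y)) * (2:ℤ)^m else 0)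
        = (2:ℤ) ^ m := by
    intro x
    rw [Finset.sum_ite_eq' univ x (fun y => chiAB m (a * (f x + f y)) * (2:ℤ)^m)]
    simp [two_eq_zeroK, chiAB_zero]
  rw [Finset.sum_congr rfl fun x _ => hx x]
  rw [Finset.sum_const, card_univ, cardK m hm, nsmul_eq_mul]
  push_cast; ring

/-- U-coordinate of a quadruple. -/
noncomputable def UqAB (f : K → K) (p : (K × K) × (K × K)) : K :=
  f p.1.1 + f p.1.2 + f p.2.1 + f p.2.2

/-- V-coordinate of a quadruple. -/
noncomputable def VqAB (p : (K × K) × (K × K)) : K :=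
  p.1.1 + p.1.2 + p.2.1 + p.2.2

/-- The quadruples counted by the fourth moment. -/
noncomputable def QsetAB (f : K → K) : Finset ((K × K) × (K × K)) :=
  univ.filter fun p => UqAB m f p = 0 ∧ VqAB m p = 0

lemma walsh_four (f : K → K) (a b : K) :
    (Walsh m f a b * Walsh m f a b) * (Walsh m f a b * Walsh m f a b)
      = ∑ p : (K × K) × (K × K), chiAB m (a * UqAB m f p) * chiAB m (b * VqAB m p) := by
  rw [walsh_sq, Fintype.sum_mul_sum]
  conv_rhs => rw [Fintype.sum_prod_type]
  refine Finset.sum_congr rfl fun q _ => Finset.sum_congr rfl fun r _ => ?_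
  rw [chiAB_mul, chiAB_mul, chiAB_mul, chiAB_mul]
  unfold UqAB VqAB
  congr 1
  simp only []
  ring

lemma sum4 (hm : m ≠ 0) (f : K → K) :
    ∑ a : K, ∑ b : K, (Walsh m f a b * Walsh m f a b) * (Walsh m f a b * Walsh m f a b)
      = (2:ℤ) ^ m * 2 ^ m * (QsetAB m f).card := by
  simp_rw [walsh_four]
  have hsw : (∑ a : K, ∑ b : K, ∑ p : (K × K) × (K × K),
        chiAB m (a * UqAB m f p) * chiAB m (b * VqAB m p))
      = ∑ p : (K × K) × (K × K), ∑ a : K, ∑ b : K,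
        chiAB m (a * UqAB m f p) * chiAB m (b * VqAB m p) := by
    calc (∑ a : K, ∑ b : K, ∑ p : (K × K) × (K × K),
            chiAB m (a * UqAB m f p) * chiAB m (b * VqAB m p))
        = ∑ a : K, ∑ p : (K × K) × (K × K), ∑ b : K,
            chiAB m (a * UqAB m f p) * chiAB m (b * VqAB m p) :=
          Finset.sum_congr rfl fun a _ => Finset.sum_comm
      _ = ∑ p : (K × K) × (K × K), ∑ a : K, ∑ b : K,
            chiAB m (a * UqAB m f p) * chiAB m (b * VqAB m p) := Finset.sum_comm
  rw [hsw]
  have h1 : ∀ p : (K × K) × (K × K),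
      (∑ a : K, ∑ b : K, chiAB m (a * UqAB m f p) * chiAB m (b * VqAB m p))
        = (if UqAB m f p = 0 then (2:ℤ)^m else 0) * (if VqAB m p = 0 then (2:ℤ)^m else 0) := by
    intro p
    rw [← Fintype.sum_mul_sum, sum_chiAB m hm, sum_chiAB m hm]
  have h2 : ∀ p ∈ (univ : Finset ((K × K) × (K × K))),
      (∑ a : K, ∑ b : K, chiAB m (a * UqAB m f p) * chiAB m (b * VqAB m p))
        = if (UqAB m f p = 0 ∧ VqAB m p = 0) then (2:ℤ)^m * 2^m else 0 := by
    intro p _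
    rw [h1]
    split_ifs with hu hv hv' <;> simp_all
  rw [Finset.sum_congr rfl h2, ← Finset.sum_filter]
  rw [show (univ.filter fun p => UqAB m f p = 0 ∧ VqAB m p = 0) = QsetAB m f from rfl]
  rw [Finset.sum_const, nsmul_eq_mul]
  ring

lemma ab_val (hmodd : Odd m) (w : ℤ)
    (hw : w ∈ ({0, 2 ^ ((m + 1) / 2), -2 ^ ((m + 1) / 2)} : Set ℤ)) :
    (w * w) * (w * w) = 2 ^ (m + 1) * (w * w) := by
  have hk : (2:ℤ) ^ ((m + 1) / 2) * 2 ^ ((m + 1) / 2) = 2 ^ (m + 1) := by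
    rw [← pow_add]
    congr 1
    obtain ⟨k, hk⟩ := hmodd
    omega
  simp only [Set.mem_insert_iff, Set.mem_singleton_iff] at hw
  rcases hw with rfl | rfl | rfl
  · ring
  · rw [hk]
  · rw [show (-(2:ℤ) ^ ((m+1)/2)) * (-(2:ℤ)^((m+1)/2)) = 2 ^ ((m+1)/2) * 2 ^ ((m+1)/2) from by ring,
      hk]

lemma card_Qset (hm1 : 1 ≤ m) (hmodd : Odd m) (f : K → K)
    (hAB : ∀ a b : K, a ≠ 0 →
      Walsh m f a b ∈ ({0, 2 ^ ((m + 1) / 2), -2 ^ ((m + 1) / 2)} : Set ℤ)) :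
    ((QsetAB m f).card : ℤ) = 3 * (2 ^ m * 2 ^ m) - 2 * 2 ^ m := by
  have hm : m ≠ 0 := by omega
  have key := sum4 m hm f
  set W4 : K → ℤ := fun a => ∑ b : K,
    (Walsh m f a b * Walsh m f a b) * (Walsh m f a b * Walsh m f a b) with hW4
  have split : ∑ a : K, W4 a = W4 0 + ∑ a ∈ univ.erase 0, W4 a :=
    (Finset.add_sum_erase univ W4 (mem_univ 0)).symm
  have hzero : W4 0 = (2:ℤ)^m * 2^m * (2^m * 2^m) := by
    simp only [hW4]
    have : ∀ b : K,
        (Walsh m f 0 b * Walsh m f 0 b) * (Walsh m f 0 b * Walsh m f 0 b)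
          = if b = 0 then ((2:ℤ)^m * 2^m) * (2^m * 2^m) else 0 := by
      intro b
      rw [walsh_zero_left m hm]
      split_ifs <;> ring
    rw [Finset.sum_congr rfl fun b _ => this b,
      Finset.sum_ite_eq' univ (0:K) (fun _ => ((2:ℤ)^m * 2^m) * (2^m * 2^m))]
    simp
  have herase : ∀ a ∈ univ.erase (0:K), W4 a = 2 ^ (m + 1) * ((2:ℤ)^m * 2^m) := by
    intro a ha
    have ha0 : a ≠ 0 := (Finset.mem_erase.mp ha).1
    simp only [hW4]
    have : ∀ b : K,
        (Walsh m f a b * Walsh m f a b) * (Walsh m f a b * Walsh m f a b)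
          = 2 ^ (m + 1) * (Walsh m f a b * Walsh m f a b) :=
      fun b => ab_val m hmodd _ (hAB a b ha0)
    rw [Finset.sum_congr rfl fun b _ => this b, ← Finset.mul_sum, parseval m hm f a]
  have hcarderase : ((univ.erase (0:K)).card : ℤ) = 2 ^ m - 1 := by
    rw [Finset.card_erase_of_mem (mem_univ 0), card_univ, cardK m hm]
    have : (1:ℕ) ≤ 2 ^ m := Nat.one_le_two_pow
    push_cast [this]
    ring
  have hsum : ∑ a : K, W4 a
      = (2:ℤ)^m * 2^m * (2^m * 2^m) + ((2:ℤ)^m - 1) * (2 ^ (m+1) * (2^m * 2^m)) := by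
    rw [split, hzero, Finset.sum_congr rfl herase, Finset.sum_const, nsmul_eq_mul, hcarderase]
  rw [hsum] at key
  have ht : ((2:ℤ)^m * 2^m) ≠ 0 := by positivity
  apply mul_left_cancel₀ ht
  rw [← key]
  rw [show (2:ℤ) ^ (m + 1) = 2 * 2 ^ m from by rw [pow_succ]; ring]
  ring

/-- Trivial quadruples of type A. -/
noncomputable def AsetAB : Finset ((K × K) × (K × K)) :=
  univ.filter fun p => p.1.1 = p.1.2 ∧ p.2.1 = p.2.2

/-- Trivial quadruples of type B. -/
noncomputable def BsetAB : Finset ((K × K) × (K × K)) :=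
  univ.filter fun p => p.1.1 = p.2.1 ∧ p.1.2 = p.2.2

/-- Trivial quadruples of type C. -/
noncomputable def CsetAB : Finset ((K × K) × (K × K)) :=
  univ.filter fun p => p.1.1 = p.2.2 ∧ p.1.2 = p.2.1

/-- Diagonal quadruples. -/
noncomputable def DsetAB : Finset ((K × K) × (K × K)) :=
  (univ : Finset K).image fun x => ((x, x), (x, x))

lemma card_Aset (hm : m ≠ 0) : (AsetAB m).card = 2 ^ m * 2 ^ m := by
  have h : AsetAB m = (univ : Finset (K × K)).image fun q => ((q.1, q.1), (q.2, q.2)) := by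
    ext ⟨⟨x, y⟩, ⟨z, w⟩⟩
    simp only [AsetAB, Finset.mem_filter, Finset.mem_image, Finset.mem_univ, true_and,
      Prod.mk.injEq, Prod.exists]
    constructor
    · rintro ⟨rfl, rfl⟩; exact ⟨x, z, by tauto⟩
    · rintro ⟨u, v, ⟨⟨rfl, rfl⟩, rfl, rfl⟩⟩; exact ⟨rfl, rfl⟩
  rw [h, Finset.card_image_of_injective _ (by
    intro q r hqr
    simp only [Prod.mk.injEq] at hqr
    exact Prod.ext hqr.1.1 hqr.2.1)]
  rw [card_univ, Fintype.card_prod, cardK m hm]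

lemma card_Bset (hm : m ≠ 0) : (BsetAB m).card = 2 ^ m * 2 ^ m := by
  have h : BsetAB m = (univ : Finset (K × K)).image fun q => ((q.1, q.2), (q.1, q.2)) := by
    ext ⟨⟨x, y⟩, ⟨z, w⟩⟩
    simp only [BsetAB, Finset.mem_filter, Finset.mem_image, Finset.mem_univ, true_and,
      Prod.mk.injEq, Prod.exists]
    constructor
    · rintro ⟨rfl, rfl⟩; exact ⟨x, y, by tauto⟩
    · rintro ⟨u, v, ⟨⟨rfl, rfl⟩, rfl, rfl⟩⟩; exact ⟨rfl, rfl⟩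
  rw [h, Finset.card_image_of_injective _ (by
    intro q r hqr
    simp only [Prod.mk.injEq] at hqr
    exact Prod.ext hqr.1.1 hqr.1.2)]
  rw [card_univ, Fintype.card_prod, cardK m hm]

lemma card_Cset (hm : m ≠ 0) : (CsetAB m).card = 2 ^ m * 2 ^ m := by
  have h : CsetAB m = (univ : Finset (K × K)).image fun q => ((q.1, q.2), (q.2, q.1)) := by
    ext ⟨⟨x, y⟩, ⟨z, w⟩⟩
    simp only [CsetAB, Finset.mem_filter, Finset.mem_image, Finset.mem_univ, true_and,
      Prod.mk.injEq, Prod.exists]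
    constructor
    · rintro ⟨rfl, rfl⟩; exact ⟨x, y, by tauto⟩
    · rintro ⟨u, v, ⟨⟨rfl, rfl⟩, rfl, rfl⟩⟩; exact ⟨rfl, rfl⟩
  rw [h, Finset.card_image_of_injective _ (by
    intro q r hqr
    simp only [Prod.mk.injEq] at hqr
    exact Prod.ext hqr.1.1 hqr.1.2)]
  rw [card_univ, Fintype.card_prod, cardK m hm]

lemma card_Dset (hm : m ≠ 0) : (DsetAB m).card = 2 ^ m := by
  rw [DsetAB, Finset.card_image_of_injective _ (by
    intro q r hqr
    simp only [Prod.mk.injEq] at hqr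
    exact hqr.1.1), card_univ, cardK m hm]

lemma inter_AB : AsetAB m ∩ BsetAB m = DsetAB m := by
  ext ⟨⟨x, y⟩, ⟨z, w⟩⟩
  simp only [AsetAB, BsetAB, DsetAB, Finset.mem_inter, Finset.mem_filter, Finset.mem_image,
    Finset.mem_univ, true_and, Prod.mk.injEq]
  constructor
  · rintro ⟨⟨rfl, rfl⟩, rfl, -⟩; exact ⟨x, by tauto⟩
  · rintro ⟨u, ⟨rfl, rfl⟩, rfl, rfl⟩; tauto

lemma inter_AC : AsetAB m ∩ CsetAB m = DsetAB m := by
  ext ⟨⟨x, y⟩, ⟨z, w⟩⟩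
  simp only [AsetAB, CsetAB, DsetAB, Finset.mem_inter, Finset.mem_filter, Finset.mem_image,
    Finset.mem_univ, true_and, Prod.mk.injEq]
  constructor
  · rintro ⟨⟨rfl, rfl⟩, rfl, h⟩; exact ⟨x, by tauto⟩
  · rintro ⟨u, ⟨rfl, rfl⟩, rfl, rfl⟩; tauto

lemma inter_BC : BsetAB m ∩ CsetAB m = DsetAB m := by
  ext ⟨⟨x, y⟩, ⟨z, w⟩⟩
  simp only [BsetAB, CsetAB, DsetAB, Finset.mem_inter, Finset.mem_filter, Finset.mem_image,
    Finset.mem_univ, true_and, Prod.mk.injEq]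
  constructor
  · rintro ⟨⟨rfl, rfl⟩, rfl, h⟩; exact ⟨x, by tauto⟩
  · rintro ⟨u, ⟨rfl, rfl⟩, rfl, rfl⟩; tauto

/-- The set of trivial quadruples. -/
noncomputable def TrivAB : Finset ((K × K) × (K × K)) :=
  AsetAB m ∪ BsetAB m ∪ CsetAB m

lemma card_Triv (hm : m ≠ 0) :
    (TrivAB m).card = 3 * (2 ^ m * 2 ^ m) - 2 * 2 ^ m := by
  have hq : 1 ≤ 2 ^ m := Nat.one_le_two_pow
  have h1 := Finset.card_union_add_card_inter (AsetAB m) (BsetAB m)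
  rw [inter_AB, card_Aset m hm, card_Bset m hm, card_Dset m hm] at h1
  have h2 := Finset.card_union_add_card_inter (AsetAB m ∪ BsetAB m) (CsetAB m)
  rw [Finset.union_inter_distrib_right, inter_AC, inter_BC, Finset.union_self,
    card_Cset m hm, card_Dset m hm] at h2
  unfold TrivAB
  omega

lemma Triv_subset (f : K → K) : TrivAB m ⊆ QsetAB m f := by
  intro p hp
  rw [QsetAB, Finset.mem_filter]
  refine ⟨mem_univ _, ?_⟩
  unfold UqAB VqAB
  simp only [TrivAB, Finset.mem_union] at hp
  rcases hp with (hp | hp) | hp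
  · rw [AsetAB, Finset.mem_filter] at hp
    obtain ⟨-, h1, h2⟩ := hp
    rw [← h1, ← h2]
    constructor
    · rw [show f p.1.1 + f p.1.1 + f p.2.1 + f p.2.1
        = (f p.1.1 + f p.1.1) + (f p.2.1 + f p.2.1) from by ring,
        two_eq_zeroK, two_eq_zeroK, add_zero]
    · rw [show p.1.1 + p.1.1 + p.2.1 + p.2.1
        = (p.1.1 + p.1.1) + (p.2.1 + p.2.1) from by ring,
        two_eq_zeroK, two_eq_zeroK, add_zero]
  · rw [BsetAB, Finset.mem_filter] at hp
    obtain ⟨-, h1, h2⟩ := hp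
    rw [← h1, ← h2]
    constructor
    · rw [show f p.1.1 + f p.1.2 + f p.1.1 + f p.1.2
        = (f p.1.1 + f p.1.1) + (f p.1.2 + f p.1.2) from by ring,
        two_eq_zeroK, two_eq_zeroK, add_zero]
    · rw [show p.1.1 + p.1.2 + p.1.1 + p.1.2
        = (p.1.1 + p.1.1) + (p.1.2 + p.1.2) from by ring,
        two_eq_zeroK, two_eq_zeroK, add_zero]
  · rw [CsetAB, Finset.mem_filter] at hp
    obtain ⟨-, h1, h2⟩ := hp
    rw [← h1, ← h2]
    constructor
    · rw [show f p.1.1 + f p.1.2 + f p.1.2 + f p.1.1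
        = (f p.1.1 + f p.1.1) + (f p.1.2 + f p.1.2) from by ring,
        two_eq_zeroK, two_eq_zeroK, add_zero]
    · rw [show p.1.1 + p.1.2 + p.1.2 + p.1.1
        = (p.1.1 + p.1.1) + (p.1.2 + p.1.2) from by ring,
        two_eq_zeroK, two_eq_zeroK, add_zero]

lemma Qset_eq_Triv (hm1 : 1 ≤ m) (hmodd : Odd m) (f : K → K)
    (hAB : ∀ a b : K, a ≠ 0 →
      Walsh m f a b ∈ ({0, 2 ^ ((m + 1) / 2), -2 ^ ((m + 1) / 2)} : Set ℤ)) :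
    QsetAB m f = TrivAB m := by
  have hm : m ≠ 0 := by omega
  have hq : 1 ≤ 2 ^ m := Nat.one_le_two_pow
  have h2q : 2 * 2 ^ m ≤ 3 * (2 ^ m * 2 ^ m) := by nlinarith
  have hcardT : ((TrivAB m).card : ℤ) = 3 * (2 ^ m * 2 ^ m) - 2 * 2 ^ m := by
    rw [card_Triv m hm]
    push_cast [h2q]
    ring
  have hcardQ := card_Qset m hm1 hmodd f hAB
  have : (QsetAB m f).card = (TrivAB m).card := by
    have := hcardQ.trans hcardT.symm
    exact_mod_cast this
  exact (Finset.eq_of_subset_of_card_le (Triv_subset m f) this.le).symm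

end AuxAB

/-- An almost bent function on `GF(2^m)` is almost perfect nonlinear. -/
theorem stmt0 (m : ℕ) (hm1 : 1 ≤ m) (hmodd : Odd m)
    (f : GaloisField 2 m → GaloisField 2 m)
    (hAB : ∀ a b : GaloisField 2 m, a ≠ 0 →
      Walsh m f a b ∈ ({0, 2 ^ ((m + 1) / 2), -2 ^ ((m + 1) / 2)} : Set ℤ)) :
    ∀ a b : GaloisField 2 m, a ≠ 0 →
      (Finset.univ.filter (fun x : GaloisField 2 m => f (x + a) + f x = b)).card ≤ 2 := by
  intro a b ha
  by_contra hcon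
  push_neg at hcon
  set s := Finset.univ.filter (fun x : GaloisField 2 m => f (x + a) + f x = b) with hs
  obtain ⟨x1, hx1⟩ := Finset.card_pos.mp (by omega : 0 < s.card)
  have hx1' : f (x1 + a) + f x1 = b := (Finset.mem_filter.mp hx1).2
  have hx1a : x1 + a ∈ s := by
    rw [hs, Finset.mem_filter]
    refine ⟨Finset.mem_univ _, ?_⟩
    rw [add_assoc, two_eq_zeroK, add_zero, add_comm]
    exact hx1'
  have hpair : ({x1, x1 + a} : Finset (GaloisField 2 m)).card ≤ 2 := by
    apply le_trans (Finset.card_insert_le _ _)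
    simp
  have hsd : 0 < (s \ {x1, x1 + a}).card := by
    have := Finset.le_card_sdiff ({x1, x1 + a} : Finset (GaloisField 2 m)) s
    omega
  obtain ⟨x2, hx2⟩ := Finset.card_pos.mp hsd
  rw [Finset.mem_sdiff] at hx2
  obtain ⟨hx2s, hx2n⟩ := hx2
  have hx2' : f (x2 + a) + f x2 = b := (Finset.mem_filter.mp hx2s).2
  have hx2ne1 : x2 ≠ x1 := fun h => hx2n (by simp [h])
  have hx2ne2 : x2 ≠ x1 + a := fun h => hx2n (by simp [h])
  -- the quadruple
  set p : ((GaloisField 2 m × GaloisField 2 m) × (GaloisField 2 m × GaloisField 2 m)) :=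
    ((x1, x1 + a), (x2, x2 + a)) with hp
  have hpQ : p ∈ QsetAB m f := by
    rw [QsetAB, Finset.mem_filter]
    refine ⟨Finset.mem_univ _, ?_, ?_⟩
    · show f x1 + f (x1 + a) + f x2 + f (x2 + a) = 0
      rw [show f x1 + f (x1 + a) + f x2 + f (x2 + a)
        = (f (x1 + a) + f x1) + (f (x2 + a) + f x2) from by ring, hx1', hx2', two_eq_zeroK]
    · show x1 + (x1 + a) + x2 + (x2 + a) = 0
      rw [show x1 + (x1 + a) + x2 + (x2 + a)
        = ((x1 + x1) + (x2 + x2)) + (a + a) from by ring]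
      simp only [two_eq_zeroK, add_zero, zero_add]
  rw [Qset_eq_Triv m hm1 hmodd f hAB] at hpQ
  simp only [TrivAB, Finset.mem_union] at hpQ
  rcases hpQ with (hpm | hpm) | hpm
  · rw [AsetAB, Finset.mem_filter] at hpm
    have : x1 = x1 + a := hpm.2.1
    exact ha (by rwa [left_eq_add] at this)
  · rw [BsetAB, Finset.mem_filter] at hpm
    exact hx2ne1 hpm.2.1.symm
  · rw [CsetAB, Finset.mem_filter] at hpm
    have : x1 = x2 + a := hpm.2.1
    apply hx2ne2
    rw [this, add_assoc, two_eq_zeroK, add_zero]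
end

section
/- Let m be even, m ≥ 4, and f(x) = x^{2^{m/2}+1} on F_{2^m}. For any a ∈ F_{2^m} and b ∈ F_{2^m}, the square of the Walsh sum satisfies: W_f(a,b)² = 2^m · W_f(a,b) if a ∈ F_{2^{m/2}}, and W_f(a,b)² = 2^m otherwise. -/
open Finset
open scoped Classical

/-! Write ψ(t) = (-1)^Tr(t), q = 2^(m/2) and f(x) = a x^(q+1) + b x, so that W = Σ_x ψ(f x).
Then W² = Σ_z Σ_x ψ(f x) ψ(f (x + z)). Expanding (x + z)^(q+1) and using Tr(u x^q) = Tr(u^q x)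
(because x^(q²) = x), the summand becomes ψ(f z) ψ((a + a^q) z^q x). The inner sum over x is
therefore 2^m when (a + a^q) z^q = 0 and 0 otherwise: if a^q = a this happens for every z, giving
W² = 2^m W; otherwise only for z = 0, giving W² = 2^m. -/

lemma sq_sum_eq_sum_sum_mul_add {G R : Type*} [AddGroup G] [Fintype G] [CommSemiring R]
    (g : G → R) : (∑ x, g x) ^ 2 = ∑ z, ∑ x, g x * g (x + z) := by
  calc (∑ x, g x) ^ 2 = ∑ x, ∑ z, g x * g (x + z) := by
        rw [sq, sum_mul_sum]
        exact sum_congr rfl fun x _ => (Fintype.sum_equiv (Equiv.addLeft x) _ _ fun _ => rfl).symm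
    _ = ∑ z, ∑ x, g x * g (x + z) := sum_comm

section

variable {K : Type*} [Field K] [Algebra (ZMod 2) K]

local instance : CharP K 2 := charP_of_injective_algebraMap' (ZMod 2) 2

noncomputable def traceChar : AddChar K ℤ :=
  (AddChar.zmodChar 2 (by norm_num : (-1 : ℤ) ^ 2 = 1)).compAddMonoidHom
    (Algebra.trace (ZMod 2) K).toAddMonoidHom

lemma traceChar_apply (t : K) :
    traceChar t = (-1 : ℤ) ^ (Algebra.trace (ZMod 2) K t).val := rfl

lemma trace_pow_two_pow [Finite K] (k : ℕ) (x : K) :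
    Algebra.trace (ZMod 2) K (x ^ 2 ^ k) = Algebra.trace (ZMod 2) K x := by
  induction k with
  | zero => simp
  | succ k ih =>
    rw [pow_succ, pow_mul, ← ih]
    exact Algebra.trace_eq_of_algEquiv (FiniteField.frobeniusAlgEquivOfAlgebraic (ZMod 2) K) _

lemma sum_traceChar_mul_eq_zero [Fintype K] {c : K} (hc : c ≠ 0) : ∑ y, traceChar (c * y) = 0 := by
  obtain ⟨y, hy⟩ : ∃ y, Algebra.trace (ZMod 2) K (c * y) ≠ 0 := by
    by_contra! h
    exact hc ((traceForm_nondegenerate (ZMod 2) K).1 c h)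
  refine AddChar.sum_eq_zero_of_ne_one (ψ := traceChar.mulShift c) (AddChar.ne_one_iff.2 ⟨y, ?_⟩)
  rw [AddChar.mulShift_apply, traceChar_apply]
  generalize Algebra.trace (ZMod 2) K (c * y) = t at hy
  revert t
  decide

variable [Fintype K] {k : ℕ}

lemma trace_mul_pow_eq_trace_pow_mul (hK : Fintype.card K = (2 ^ k) ^ 2) (u x : K) :
    Algebra.trace (ZMod 2) K (u * x ^ 2 ^ k) = Algebra.trace (ZMod 2) K (u ^ 2 ^ k * x) := by
  rw [← trace_pow_two_pow k (u * x ^ 2 ^ k), mul_pow, ← pow_mul, ← sq, ← hK,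
    FiniteField.pow_card]

lemma traceChar_mul_traceChar_add (hK : Fintype.card K = (2 ^ k) ^ 2) (a b x z : K) :
    traceChar (a * x ^ (2 ^ k + 1) + b * x) * traceChar (a * (x + z) ^ (2 ^ k + 1) + b * (x + z))
      = traceChar (a * z ^ (2 ^ k + 1) + b * z) * traceChar ((a + a ^ 2 ^ k) * z ^ 2 ^ k * x) := by
  have hsum : a * x ^ (2 ^ k + 1) + b * x + (a * (x + z) ^ (2 ^ k + 1) + b * (x + z))
      = a * z * x ^ 2 ^ k + (a * z ^ 2 ^ k * x + (a * z ^ (2 ^ k + 1) + b * z)) := by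
    rw [pow_succ (x + z), add_pow_char_pow]
    linear_combination (a * x ^ (2 ^ k + 1) + b * x) * CharTwo.two_eq_zero (R := K)
  rw [← AddChar.map_add_eq_mul, ← AddChar.map_add_eq_mul, traceChar_apply, traceChar_apply, hsum,
    map_add, trace_mul_pow_eq_trace_pow_mul hK, ← map_add]
  congr 3
  ring

lemma sq_sum_traceChar (hK : Fintype.card K = (2 ^ k) ^ 2) (a b : K) :
    (∑ x, traceChar (a * x ^ (2 ^ k + 1) + b * x)) ^ 2
      = ∑ z, traceChar (a * z ^ (2 ^ k + 1) + b * z)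
          * ∑ x, traceChar ((a + a ^ 2 ^ k) * z ^ 2 ^ k * x) := by
  simp_rw [sq_sum_eq_sum_sum_mul_add, traceChar_mul_traceChar_add hK, mul_sum]

lemma sq_sum_traceChar_of_pow_eq (hK : Fintype.card K = (2 ^ k) ^ 2) {a : K} (ha : a ^ 2 ^ k = a)
    (b : K) : (∑ x, traceChar (a * x ^ (2 ^ k + 1) + b * x)) ^ 2
      = Fintype.card K * ∑ x, traceChar (a * x ^ (2 ^ k + 1) + b * x) := by
  simp [sq_sum_traceChar hK, ha, CharTwo.add_self_eq_zero, mul_sum, mul_comm]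

lemma sq_sum_traceChar_of_pow_ne (hK : Fintype.card K = (2 ^ k) ^ 2) {a : K} (ha : a ^ 2 ^ k ≠ a)
    (b : K) : (∑ x, traceChar (a * x ^ (2 ^ k + 1) + b * x)) ^ 2 = Fintype.card K := by
  rw [sq_sum_traceChar hK, sum_eq_single 0]
  · simp
  · intro z _ hz
    have hc : (a + a ^ 2 ^ k) * z ^ 2 ^ k ≠ 0 :=
      mul_ne_zero (fun h => ha (CharTwo.add_eq_zero.1 h).symm) (pow_ne_zero _ hz)
    rw [sum_traceChar_mul_eq_zero hc, mul_zero]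
  · simp

end

/-- Square of the Walsh sum of `x ↦ x^{2^{m/2}+1}`. -/
theorem stmt3 (m : ℕ) (hm : Even m) (hm4 : 4 ≤ m)
    (a b : GaloisField 2 m) :
    (a ^ 2 ^ (m / 2) = a →
      (Walsh m (fun x => x ^ (2 ^ (m / 2) + 1)) a b) ^ 2
        = 2 ^ m * Walsh m (fun x => x ^ (2 ^ (m / 2) + 1)) a b)
    ∧ (a ^ 2 ^ (m / 2) ≠ a →
      (Walsh m (fun x => x ^ (2 ^ (m / 2) + 1)) a b) ^ 2 = 2 ^ m) := by
  have hcard : Fintype.card (GaloisField 2 m) = 2 ^ m := by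
    rw [← Nat.card_eq_fintype_card, GaloisField.card 2 m (by omega)]
  have hK : Fintype.card (GaloisField 2 m) = (2 ^ (m / 2)) ^ 2 := by
    rw [hcard, ← pow_mul, Nat.div_mul_cancel hm.two_dvd]
  refine ⟨fun ha => ?_, fun ha => ?_⟩
  · exact_mod_cast hcard ▸ sq_sum_traceChar_of_pow_eq hK ha b
  · exact_mod_cast hcard ▸ sq_sum_traceChar_of_pow_ne hK ha b
end

section
/- Let m ≥ 2 and let γ be a primitive element of F_{2^m} with 3 | 2^m - 1. For a ∈ F_{2^m}, let N(a) be the number of zeros among the three values Tr(a), Tr(a γ^{(2^m-1)/3}), Tr(a γ^{2(2^m-1)/3}). Then as a ranges over F_{2^m}: N(a) = 3 for exactly 2^{m-2} elements a, and N(a) = 1 for exactly 3·2^{m-2} elements a; in particular N(a) is never 0 or 2. -/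
open Finset
open scoped Classical

/-!
With `ω = γ^((2^m-1)/3)` a primitive cube root of unity, `1 + ω + ω² = 0` forces
`Tr a + Tr (aω) + Tr (aω²) = 0` in `F₂`, so either all three traces vanish (`N a = 3`) or exactly
one does (`N a = 1`). The first case says that `a` lies in the trace-form orthogonal of the
`F₂`-span of `1, ω`, a plane since `ω ∉ F₂`; by nondegeneracy of the trace form this orthogonal
has dimension `m - 2`, hence `2^(m-2)` elements.
-/

open Module

theorem LinearMap.BilinForm.mem_orthogonal_span_pair_iff {R M : Type*} [CommRing R]
    [AddCommGroup M] [Module R M] (B : LinearMap.BilinForm R M) {x y a : M} :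
    a ∈ B.orthogonal (Submodule.span R {x, y}) ↔ B x a = 0 ∧ B y a = 0 := by
  simp only [BilinForm.mem_orthogonal_iff, Submodule.mem_span_pair]
  constructor
  · intro h
    exact ⟨h x ⟨1, 0, by simp⟩, h y ⟨0, 1, by simp⟩⟩
  · rintro ⟨hx, hy⟩ _ ⟨s, t, rfl⟩
    simp [hx, hy]

theorem linearIndependent_one_pair_iff {K L : Type*} [Field K] [Ring L] [Nontrivial L]
    [Algebra K L] {x : L} :
    LinearIndependent K ![1, x] ↔ x ∉ Set.range (algebraMap K L) := by
  simp [LinearIndependent.pair_iff' one_ne_zero, Algebra.algebraMap_eq_smul_one]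

theorem notMem_range_algebraMap_zmod_two {L : Type*} [Ring L] [Algebra (ZMod 2) L] {x : L}
    (h0 : x ≠ 0) (h1 : x ≠ 1) : x ∉ Set.range (algebraMap (ZMod 2) L) := by
  rintro ⟨c, hc⟩
  obtain rfl | rfl : c = 0 ∨ c = 1 := by clear hc; revert c; decide
  · exact h0 (hc.symm.trans (map_zero _))
  · exact h1 (hc.symm.trans (map_one _))

theorem IsPrimitiveRoot.one_add_add_sq_eq_zero {R : Type*} [CommRing R] [IsDomain R] {ω : R}
    (hω : IsPrimitiveRoot ω 3) : 1 + ω + ω ^ 2 = 0 := by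
  simpa [Finset.sum_range_succ] using hω.geom_sum_eq_zero (by norm_num)

theorem count_zeros_of_add_add_eq_zero {x y z : ZMod 2} (h : x + y + z = 0) :
    ((if x = 0 then 1 else 0) + (if y = 0 then 1 else 0) + (if z = 0 then 1 else 0) : ℕ) =
      if x = 0 ∧ y = 0 then 3 else 1 := by
  revert x y z; decide

namespace Algebra

theorem trace_add_trace_mul_add_trace_mul_sq {K L : Type*} [CommRing K] [CommRing L]
    [Algebra K L] {ω : L} (hω : 1 + ω + ω ^ 2 = 0) (a : L) :
    trace K L a + trace K L (a * ω) + trace K L (a * ω ^ 2) = 0 := by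
  rw [← map_add, ← map_add, show a + a * ω + a * ω ^ 2 = a * (1 + ω + ω ^ 2) by ring, hω,
    mul_zero, map_zero]

variable {K L : Type*} [Field K] [Field L] [Algebra K L] [Fintype K] [Fintype L]

theorem card_traceForm_orthogonal (W : Submodule K L) :
    Nat.card ((traceForm K L).orthogonal W) = Fintype.card K ^ (finrank K L - finrank K W) := by
  rw [← LinearMap.BilinForm.finrank_orthogonal (traceForm_nondegenerate K L),
    Nat.card_eq_fintype_card, card_eq_pow_finrank (K := K)]

theorem card_trace_eq_zero_and_trace_mul_eq_zero {x : L} (hx : x ∉ Set.range (algebraMap K L)) :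
    Nat.card {a : L // trace K L a = 0 ∧ trace K L (a * x) = 0} =
      Fintype.card K ^ (finrank K L - 2) := by
  have hspan : finrank K (Submodule.span K {1, x}) = 2 := by
    rw [← Matrix.range_cons_cons_empty, finrank_span_eq_card (linearIndependent_one_pair_iff.2 hx),
      Fintype.card_fin]
  rw [← hspan, ← card_traceForm_orthogonal]
  refine Nat.card_congr (Equiv.subtypeEquivRight fun a => ?_)
  rw [LinearMap.BilinForm.mem_orthogonal_span_pair_iff, traceForm_apply,
    traceForm_apply, one_mul, mul_comm x]

end Algebra

/-- Distribution of the number of zero traces among `Tr(a), Tr(aω), Tr(aω²)`. -/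
theorem stmt4 (m : ℕ) (hm : 2 ≤ m) (h3 : 3 ∣ 2 ^ m - 1)
    (γ : GaloisField 2 m) (hγ : orderOf γ = 2 ^ m - 1)
    (N : GaloisField 2 m → ℕ)
    (hN : ∀ a, N a = (if Tr m a = 0 then 1 else 0)
      + (if Tr m (a * γ ^ ((2 ^ m - 1) / 3)) = 0 then 1 else 0)
      + (if Tr m (a * γ ^ (2 * ((2 ^ m - 1) / 3))) = 0 then 1 else 0)) :
    (Finset.univ.filter (fun a : GaloisField 2 m => N a = 3)).card = 2 ^ (m - 2)
    ∧ (Finset.univ.filter (fun a : GaloisField 2 m => N a = 1)).card = 3 * 2 ^ (m - 2)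
    ∧ ∀ a : GaloisField 2 m, N a ≠ 0 ∧ N a ≠ 2 := by
  have hm0 : m ≠ 0 := by omega
  set ω := γ ^ ((2 ^ m - 1) / 3)
  have hω : IsPrimitiveRoot ω 3 := (hγ ▸ IsPrimitiveRoot.orderOf γ).pow
    (Nat.sub_pos_of_lt (Nat.one_lt_two_pow hm0)) (Nat.div_mul_cancel h3).symm
  have hN' : ∀ a, N a = if Tr m a = 0 ∧ Tr m (a * ω) = 0 then 3 else 1 := fun a =>
    (hN a).trans (pow_mul' γ 2 _ ▸ count_zeros_of_add_add_eq_zero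
      (Algebra.trace_add_trace_mul_add_trace_mul_sq hω.one_add_add_sq_eq_zero a))
  have hcard3 : #{a | N a = 3} = 2 ^ (m - 2) := by
    have hcard := Algebra.card_trace_eq_zero_and_trace_mul_eq_zero (K := ZMod 2)
      (notMem_range_algebraMap_zmod_two (hω.ne_zero (by norm_num)) (hω.ne_one (by norm_num)))
    rw [ZMod.card, GaloisField.finrank 2 hm0] at hcard
    rw [← hcard, ← Fintype.card_subtype, ← Nat.card_eq_fintype_card]
    exact Nat.card_congr <| Equiv.subtypeEquivRight fun a => by
      simp only [hN', Tr]; split_ifs with h <;> simp [h]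
  have hcompl : #{a | N a = 1} = #{a | ¬ N a = 3} :=
    congrArg card (filter_congr fun a _ => by rw [hN' a]; split_ifs <;> simp)
  have hsplit := card_filter_add_card_filter_not (s := univ) fun a => N a = 3
  rw [← hcompl, hcard3, card_univ, ← Nat.card_eq_fintype_card, GaloisField.card 2 m hm0,
    ← Nat.pow_sub_mul_pow 2 hm] at hsplit
  refine ⟨hcard3, by omega, fun a => by rw [hN' a]; split_ifs <;> simp⟩
end

section
/- Let m ≥ 4 and 1 ≤ k < m, ℓ = gcd(k, m). The number of 4-element subsets {x₁, x₂, x₃, x₄} of F_{2^m}* consisting of pairwise distinct nonzero elements with Tr(x₁) = Tr(x₂) = Tr(x₃) = Tr(x₄) = 1, x₁ + x₂ + x₃ + x₄ = 0, and x₁^{2^k+1} + x₂^{2^k+1} + x₃^{2^k+1} + x₄^{2^k+1} = 0, equals 2^{m-1}(2^{m-2} - 1)(2^ℓ - 2)/4!. -/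
open Finset
open scoped Classical

/-!
Ordering a solution gives 24 triples `(a, b, e)` of distinct elements of it, and in
characteristic two the fourth element is forced to be `a + b + e`. Writing `u = a + b` and
`a + e = c * u`, the solution is the affine plane `{a, a + u, a + c u, a + u + c u}`: the trace
conditions read `Tr a = 1`, `Tr u = Tr (c u) = 0`, and, `x ↦ x ^ (q + 1)` (`q = 2 ^ k`) being a
quadratic form with polar form `u v ^ q + v u ^ q`, the power sum is `u ^ (q + 1) (c ^ q + c)`.
So `c` ranges over `F_{2^ℓ} = F_{2^m} ∩ F_{2^k}` minus `F_2`, `a` over the `2 ^ (m - 1)` elements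
of trace one, and `u` over the nonzero vectors of the trace-orthogonal complement of
`span {1, c}`, which has dimension `m - 2`.
-/

open Module

section DistinctTriples

variable {α : Type*}

def PairwiseDistinct (t : α × α × α) : Prop := t.1 ≠ t.2.1 ∧ t.1 ≠ t.2.2 ∧ t.2.1 ≠ t.2.2

theorem card_filter_pairwiseDistinct (s : Finset α) :
    #{t ∈ s ×ˢ s ×ˢ s | PairwiseDistinct t} = #s * ((#s - 1) * (#s - 2)) := by
  have hfiber : ∀ a ∈ s, #{t ∈ s ×ˢ s ×ˢ s | PairwiseDistinct t ∧ t.1 = a}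
      = (#s - 1) * (#s - 2) := by
    intro a ha
    have hn : (#s - 1) * (#s - 1) - (#s - 1) = (#s - 1) * (#s - 2) := by
      rw [← Nat.mul_sub_one, Nat.sub_sub]
    rw [← hn, ← card_erase_of_mem ha, ← offDiag_card]
    refine card_bij' (fun t _ => t.2) (fun p _ => (a, p)) ?_ ?_ ?_ ?_
    · intro t h
      rw [mem_filter, mem_product, mem_product] at h
      obtain ⟨⟨-, hb, he⟩, ⟨hab, hae, hbe⟩, rfl⟩ := h
      simp [hb, he, hbe, Ne.symm hab, Ne.symm hae]
    · intro p h
      simp only [mem_offDiag, mem_erase] at h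
      obtain ⟨⟨hba, hb⟩, ⟨hea, he⟩, hbe⟩ := h
      rw [mem_filter, mem_product, mem_product]
      exact ⟨⟨ha, hb, he⟩, ⟨Ne.symm hba, Ne.symm hea, hbe⟩, rfl⟩
    · intro t h
      rw [← (mem_filter.mp h).2.2]
    · simp
  rw [card_eq_sum_card_fiberwise (f := Prod.fst) (t := s)
      fun t ht => (mem_product.mp (mem_filter.mp ht).1).1]
  simp only [filter_filter]
  rw [sum_congr rfl hfiber, sum_const, smul_eq_mul]

end DistinctTriples

theorem card_filter_prod_prod {α β γ : Type*} [Fintype α] [Fintype β] [Fintype γ]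
    (A : α → Prop) (B : β → γ → Prop) (C : γ → Prop) [DecidablePred A]
    [∀ b c, Decidable (B b c)] [DecidablePred C] :
    #{p : α × β × γ | A p.1 ∧ B p.2.1 p.2.2 ∧ C p.2.2}
      = #{a | A a} * ∑ c with C c, #{b | B b c} := by
  rw [← univ_product_univ, filter_product (p := A) (q := fun q : β × γ => B q.1 q.2 ∧ C q.2),
    card_product, card_eq_sum_card_fiberwise (f := Prod.snd) (t := {c | C c})
      fun q hq => mem_filter.mpr ⟨mem_univ _, (mem_filter.mp hq).2.2⟩]
  refine congrArg _ (sum_congr rfl fun c hc => ?_)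
  have hfiber : ({q ∈ {q : β × γ | B q.1 q.2 ∧ C q.2} | q.2 = c} : Finset (β × γ))
      = ({b | B b c} : Finset β).map ⟨(·, c), fun _ _ h => (Prod.mk.inj h).1⟩ := by
    ext ⟨b, c'⟩
    simp only [mem_filter, mem_univ, true_and, mem_map]
    constructor
    · rintro ⟨⟨hb, -⟩, rfl⟩
      exact ⟨b, hb, rfl⟩
    · rintro ⟨b, hb, h⟩
      obtain ⟨rfl, rfl⟩ := Prod.mk.inj h
      exact ⟨⟨hb, (mem_filter.mp hc).2⟩, rfl⟩
  rw [hfiber, card_map]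

section CharTwo

variable {R : Type*} [CommRing R] [CharP R 2]

noncomputable def completeQuad (t : R × R × R) : Finset R :=
  {t.1, t.2.1, t.2.2, t.1 + t.2.1 + t.2.2}

theorem PairwiseDistinct.add_add_notMem {t : R × R × R} (ht : PairwiseDistinct t) :
    t.1 + t.2.1 + t.2.2 ∉ ({t.1, t.2.1, t.2.2} : Finset R) := by
  obtain ⟨a, b, e⟩ := t
  obtain ⟨hab, hae, hbe⟩ := ht
  simp only [mem_insert, mem_singleton, not_or]
  refine ⟨fun h => hbe ?_, fun h => hae ?_, fun h => hab ?_⟩ <;>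
    rw [← CharTwo.add_eq_zero] <;> linear_combination h

theorem PairwiseDistinct.sum_completeQuad {M : Type*} [AddCommMonoid M] {t : R × R × R}
    (ht : PairwiseDistinct t) (f : R → M) :
    ∑ x ∈ completeQuad t, f x = f t.1 + f t.2.1 + f t.2.2 + f (t.1 + t.2.1 + t.2.2) := by
  have hd := ht.add_add_notMem
  simp only [mem_insert, mem_singleton, not_or] at hd
  obtain ⟨hda, hdb, hde⟩ := hd
  obtain ⟨hab, hae, hbe⟩ := ht
  rw [completeQuad, sum_insert (by simp [hab, hae, Ne.symm hda]),
    sum_insert (by simp [hbe, Ne.symm hdb]), sum_insert (by simpa using Ne.symm hde),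
    sum_singleton]
  abel

theorem PairwiseDistinct.card_completeQuad {t : R × R × R} (ht : PairwiseDistinct t) :
    #(completeQuad t) = 4 := by
  rw [card_eq_sum_ones, ht.sum_completeQuad]

theorem completeQuad_eq_of_mem {s : Finset R} (hs : #s = 4) (hsum : ∑ x ∈ s, x = 0)
    {t : R × R × R} (ht : PairwiseDistinct t) (hts : t ∈ s ×ˢ s ×ˢ s) :
    completeQuad t = s := by
  obtain ⟨a, b, e⟩ := t
  simp only [mem_product] at hts
  obtain ⟨ha, hb, he⟩ := hts
  have hsub : ({a, b, e} : Finset R) ⊆ s := by simp [insert_subset_iff, ha, hb, he]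
  obtain ⟨d, hd⟩ : ∃ d, s \ {a, b, e} = {d} := by
    rw [← card_eq_one, card_sdiff_of_subset hsub, hs,
      card_eq_three.mpr ⟨a, b, e, ht.1, ht.2.1, ht.2.2, rfl⟩]
  have hda : d = a + b + e := by
    have h := sum_sdiff hsub (f := fun x => x)
    rw [hd, hsum, sum_singleton, sum_insert (by simp [ht.1, ht.2.1]), sum_pair ht.2.2] at h
    exact CharTwo.add_eq_zero.mp (by simpa [add_assoc] using h)
  rw [← sdiff_union_of_subset hsub, hd, completeQuad, ← hda]
  ext x
  simp only [mem_insert, mem_singleton, union_insert, singleton_union]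
  tauto

theorem mul_card_eq_card_pairwiseDistinct [Fintype R] (P : Finset R → Prop) [DecidablePred P]
    (hP : ∀ s, P s → #s = 4 ∧ ∑ x ∈ s, x = 0) :
    24 * #{s | P s} = #{t : R × R × R | PairwiseDistinct t ∧ P (completeQuad t)} := by
  have hfiber : ∀ s ∈ ({s | P s} : Finset (Finset R)),
      #{t : R × R × R | (PairwiseDistinct t ∧ P (completeQuad t)) ∧ completeQuad t = s} = 24 := by
    intro s hs
    obtain ⟨hs4, hsum⟩ := hP s (mem_filter.mp hs).2
    rw [← show #s * ((#s - 1) * (#s - 2)) = 24 by rw [hs4],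
      ← card_filter_pairwiseDistinct s]
    congr 1
    ext t
    simp only [mem_filter, mem_univ, true_and]
    constructor
    · rintro ⟨⟨ht, -⟩, rfl⟩
      exact ⟨by simp [completeQuad], ht⟩
    · rintro ⟨hts, ht⟩
      have := completeQuad_eq_of_mem hs4 hsum ht hts
      exact ⟨⟨ht, this ▸ (mem_filter.mp hs).2⟩, this⟩
  rw [card_eq_sum_card_fiberwise (f := completeQuad) (t := {s | P s}) (fun t ht => by simp_all)]
  simp only [filter_filter]
  rw [sum_congr rfl hfiber, sum_const, smul_eq_mul, mul_comm]

theorem sum_plane_pow_two_pow_add_one (k : ℕ) (x u c : R) :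
    x ^ (2 ^ k + 1) + (x + u) ^ (2 ^ k + 1) + (x + c * u) ^ (2 ^ k + 1)
        + (x + u + c * u) ^ (2 ^ k + 1) = u ^ (2 ^ k + 1) * (c ^ 2 ^ k + c) := by
  simp only [pow_succ, add_pow_char_pow, mul_pow]
  linear_combination (2 * x ^ 2 ^ k * x + u ^ 2 ^ k * x + x ^ 2 ^ k * u + u ^ 2 ^ k * u
    + c ^ 2 ^ k * u ^ 2 ^ k * x + x ^ 2 ^ k * c * u + c ^ 2 ^ k * u ^ 2 ^ k * c * u)
    * CharTwo.two_eq_zero (R := R)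

end CharTwo

section FiniteField

variable {K : Type*} [Field K] [Fintype K]

theorem card_trace_mul_eq_zero [DecidableEq K] {L : Type*} [Field L] [Fintype L] [Algebra K L]
    {ι : Type*} [Fintype ι] {v : ι → L} (hv : LinearIndependent K v) :
    #{u : L | ∀ i, Algebra.trace K L (v i * u) = 0}
      = Fintype.card K ^ (finrank K L - Fintype.card ι) := by
  set W := (Algebra.traceForm K L).orthogonal (Submodule.span K (Set.range v))
  have hW : ∀ u, u ∈ W ↔ ∀ i, Algebra.trace K L (v i * u) = 0 := by
    intro u
    simp only [W, LinearMap.BilinForm.mem_orthogonal_iff, Algebra.traceForm_apply]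
    constructor
    · exact fun h i => h _ (Submodule.subset_span ⟨i, rfl⟩)
    · intro h w hw
      induction hw using Submodule.span_induction with
      | mem w hw => obtain ⟨i, rfl⟩ := hw; exact h i
      | zero => simp
      | add x y _ _ hx hy => rw [add_mul, map_add, hx, hy, add_zero]
      | smul a x _ hx => rw [smul_mul_assoc, map_smul, hx, smul_zero]
  have hrank : finrank K W = finrank K L - Fintype.card ι := by
    rw [LinearMap.BilinForm.finrank_orthogonal (traceForm_nondegenerate K L),
      finrank_span_eq_card hv]
  rw [← hrank, ← card_eq_pow_finrank (K := K) (V := W), ← Fintype.card_coe]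
  exact Fintype.card_congr (Equiv.subtypeEquivRight (by simp [hW]))

theorem card_trace_eq_zero_and_trace_mul_eq_zero [DecidableEq K] {L : Type*} [Field L]
    [Fintype L] [Algebra K L] {c : L} (hc : c ∉ Set.range (algebraMap K L)) :
    #{u : L | Algebra.trace K L u = 0 ∧ Algebra.trace K L (c * u) = 0}
      = Fintype.card K ^ (finrank K L - 2) := by
  have hv : LinearIndependent K ![1, c] := by
    refine LinearIndependent.pair_iff.mpr fun s t hst => ?_
    by_cases ht : t = 0
    · simp_all
    · refine absurd ⟨-s / t, ?_⟩ hc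
      rw [Algebra.smul_def, Algebra.smul_def] at hst
      rw [map_div₀, map_neg, div_eq_iff ((map_ne_zero _).mpr ht)]
      linear_combination -hst
  simpa [Fin.forall_fin_two] using card_trace_mul_eq_zero hv

theorem card_ne_zero_pow_eq_one (d : ℕ) :
    #{c : K | c ≠ 0 ∧ c ^ d = 1} = Nat.gcd (Fintype.card K - 1) d := by
  have h := IsCyclic.card_powMonoidHom_ker Kˣ d
  rw [Nat.card_units, Nat.card_eq_fintype_card, Nat.card_eq_fintype_card] at h
  rw [← h, ← Fintype.card_subtype]
  refine Fintype.card_congr ((unitsEquivNeZero.subtypeEquiv fun x => ?_).trans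
    (Equiv.subtypeSubtypeEquivSubtypeInter _ (fun c : K => c ^ d = 1))).symm
  simp [Units.ext_iff]

theorem card_pow_eq_self_and_ne_zero {q : ℕ} (hq : q ≠ 0) :
    #{c : K | c ^ q = c ∧ c ≠ 0} = Nat.gcd (Fintype.card K - 1) (q - 1) := by
  rw [← card_ne_zero_pow_eq_one]
  refine congrArg card (filter_congr fun c _ => ?_)
  rw [← pow_sub_one_mul hq, and_comm]
  exact and_congr_right fun hc => mul_eq_right₀ hc

theorem card_pow_two_pow_eq_self_ne_zero_ne_one {n : ℕ} (hK : Fintype.card K = 2 ^ n) (k : ℕ) :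
    #{c : K | c ^ 2 ^ k = c ∧ c ≠ 0 ∧ c ≠ 1} = 2 ^ Nat.gcd k n - 2 := by
  have h := card_pow_eq_self_and_ne_zero (K := K) (pow_ne_zero k two_ne_zero)
  rw [hK, Nat.pow_sub_one_gcd_pow_sub_one, Nat.gcd_comm] at h
  simp_rw [← and_assoc]
  rw [← filter_filter, filter_ne', card_erase_of_mem (by simp), h]
  omega

end FiniteField

theorem pairwiseDistinct_plane_iff {F : Type*} [Field F] {x u c : F} :
    PairwiseDistinct (x, x + u, x + c * u) ↔ u ≠ 0 ∧ c ≠ 0 ∧ c ≠ 1 := by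
  simp only [PairwiseDistinct, ne_eq, left_eq_add, add_right_inj, mul_eq_zero, not_or]
  grind

section TraceOverZModTwo

variable {F : Type*} [Field F] [Algebra (ZMod 2) F]

local notation "tr" => Algebra.trace (ZMod 2) F

theorem ne_zero_of_trace_eq_one {x : F} (hx : tr x = 1) : x ≠ 0 := by
  rintro rfl
  simp at hx

theorem card_trace_eq_zero [Fintype F] : #{u : F | tr u = 0} = 2 ^ (finrank (ZMod 2) F - 1) := by
  have h := card_trace_mul_eq_zero (K := ZMod 2) (v := fun _ : Unit => (1 : F))
    (linearIndependent_unique_iff.mpr one_ne_zero)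
  simpa only [one_mul, forall_const, Fintype.card_unit, ZMod.card] using h

theorem card_trace_eq_one [Fintype F] : #{x : F | tr x = 1} = 2 ^ (finrank (ZMod 2) F - 1) := by
  have h := card_filter_add_card_filter_not (s := univ) (fun x : F => tr x = 0)
  have hne : ∀ z : ZMod 2, ¬z = 0 ↔ z = 1 := by decide
  simp only [hne, card_univ, card_eq_pow_finrank (K := ZMod 2) (V := F), ZMod.card,
    card_trace_eq_zero] at h
  have h2 : 2 ^ finrank (ZMod 2) F = 2 ^ (finrank (ZMod 2) F - 1) * 2 := by
    rw [← pow_succ, Nat.sub_add_cancel finrank_pos]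
  omega

theorem card_ne_zero_trace_eq_zero_trace_mul_eq_zero [Fintype F] {c : F} (hc0 : c ≠ 0)
    (hc1 : c ≠ 1) :
    #{u : F | u ≠ 0 ∧ tr u = 0 ∧ tr (c * u) = 0} = 2 ^ (finrank (ZMod 2) F - 2) - 1 := by
  have hc : c ∉ Set.range (algebraMap (ZMod 2) F) := by
    rintro ⟨z, rfl⟩
    fin_cases z
    exacts [hc0 (map_zero _), hc1 (map_one _)]
  have h := card_trace_eq_zero_and_trace_mul_eq_zero hc
  rw [ZMod.card] at h
  have herase : ({u : F | u ≠ 0 ∧ tr u = 0 ∧ tr (c * u) = 0} : Finset F)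
      = ({u : F | tr u = 0 ∧ tr (c * u) = 0} : Finset F).erase 0 := by
    ext u
    simp
  rw [herase, card_erase_of_mem (by simp), h]

def IsSolution (k : ℕ) (s : Finset F) : Prop :=
  #s = 4 ∧ (∀ x ∈ s, x ≠ 0 ∧ tr x = 1) ∧ ∑ x ∈ s, x = 0 ∧ ∑ x ∈ s, x ^ (2 ^ k + 1) = 0

theorem forall_mem_plane_trace_eq_one_iff {x u c : F} :
    (∀ y ∈ ({x, x + u, x + c * u, x + u + c * u} : Finset F), y ≠ 0 ∧ tr y = 1) ↔
      tr x = 1 ∧ tr u = 0 ∧ tr (c * u) = 0 := by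
  have h : ∀ y : F, (y ≠ 0 ∧ tr y = 1) ↔ tr y = 1 :=
    fun y => and_iff_right_of_imp ne_zero_of_trace_eq_one
  simp only [h, mem_insert, mem_singleton, forall_eq_or_imp, forall_eq, map_add]
  generalize tr x = a, tr u = b, tr (c * u) = d
  revert a b d
  decide

theorem pairwiseDistinct_and_isSolution_plane_iff [CharP F 2] (k : ℕ) (x u c : F) :
    (PairwiseDistinct (x, x + u, x + c * u) ∧ IsSolution k (completeQuad (x, x + u, x + c * u)))
      ↔ tr x = 1 ∧ (u ≠ 0 ∧ tr u = 0 ∧ tr (c * u) = 0) ∧ (c ^ 2 ^ k = c ∧ c ≠ 0 ∧ c ≠ 1) := by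
  by_cases hPD : PairwiseDistinct (x, x + u, x + c * u)
  · obtain ⟨hu, hc0, hc1⟩ := pairwiseDistinct_plane_iff.mp hPD
    have hfour : x + (x + u) + (x + c * u) = x + u + c * u := by
      linear_combination x * CharTwo.two_eq_zero (R := F)
    have hsum := hPD.sum_completeQuad (fun y => y)
    have hpow := hPD.sum_completeQuad (fun y => y ^ (2 ^ k + 1))
    simp only [hfour] at hsum hpow
    rw [sum_plane_pow_two_pow_add_one] at hpow
    rw [IsSolution, hPD.card_completeQuad, hsum, hpow, CharTwo.add_self_eq_zero]
    simp only [completeQuad, hfour, forall_mem_plane_trace_eq_one_iff, mul_eq_zero,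
      pow_eq_zero_iff', CharTwo.add_eq_zero]
    tauto
  · rw [pairwiseDistinct_plane_iff] at hPD ⊢
    tauto

theorem card_pairwiseDistinct_isSolution_eq_card_params [Fintype F] [CharP F 2] (k : ℕ) :
    #{t : F × F × F | PairwiseDistinct t ∧ IsSolution k (completeQuad t)} =
      #{p : F × F × F | tr p.1 = 1 ∧ (p.2.1 ≠ 0 ∧ tr p.2.1 = 0 ∧ tr (p.2.2 * p.2.1) = 0) ∧
        (p.2.2 ^ 2 ^ k = p.2.2 ∧ p.2.2 ≠ 0 ∧ p.2.2 ≠ 1)} := by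
  have hplane : ∀ t : F × F × F, t.1 ≠ t.2.1 →
      (t.1, t.1 + (t.1 + t.2.1), t.1 + (t.1 + t.2.2) / (t.1 + t.2.1) * (t.1 + t.2.1)) = t := by
    rintro ⟨a, b, e⟩ hab
    have hu : a + b ≠ 0 := fun h => hab (CharTwo.add_eq_zero.mp h)
    simp only [div_mul_cancel₀ _ hu, CharTwo.add_cancel_left]
  refine card_nbij' (fun t => (t.1, t.1 + t.2.1, (t.1 + t.2.2) / (t.1 + t.2.1)))
    (fun p => (p.1, p.1 + p.2.1, p.1 + p.2.2 * p.2.1)) ?_ ?_ ?_ ?_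
  · intro t ht
    simp only [coe_filter, mem_univ, true_and] at ht ⊢
    rw [← hplane t ht.1.1] at ht
    exact (pairwiseDistinct_and_isSolution_plane_iff k _ _ _).mp ht
  · intro p hp
    simp only [coe_filter, mem_univ, true_and] at hp ⊢
    exact (pairwiseDistinct_and_isSolution_plane_iff k _ _ _).mpr hp
  · intro t ht
    simp only [coe_filter, mem_univ, true_and] at ht
    exact hplane t ht.1.1
  · rintro ⟨x, u, c⟩ hp
    simp only [coe_filter, mem_univ, true_and] at hp
    simp only [CharTwo.add_cancel_left, mul_div_cancel_right₀ _ hp.2.1.1]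

theorem card_pairwiseDistinct_isSolution [Fintype F] [CharP F 2] (k : ℕ) :
    #{t : F × F × F | PairwiseDistinct t ∧ IsSolution k (completeQuad t)} =
      2 ^ (finrank (ZMod 2) F - 1) *
        ((2 ^ Nat.gcd k (finrank (ZMod 2) F) - 2) * (2 ^ (finrank (ZMod 2) F - 2) - 1)) := by
  have hcard : Fintype.card F = 2 ^ finrank (ZMod 2) F := by
    rw [card_eq_pow_finrank (K := ZMod 2), ZMod.card]
  rw [card_pairwiseDistinct_isSolution_eq_card_params, card_filter_prod_prod (fun x => tr x = 1)
      (fun u c => u ≠ 0 ∧ tr u = 0 ∧ tr (c * u) = 0) (fun c => c ^ 2 ^ k = c ∧ c ≠ 0 ∧ c ≠ 1),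
    card_trace_eq_one,
    sum_congr rfl fun c hc => card_ne_zero_trace_eq_zero_trace_mul_eq_zero
      (mem_filter.mp hc).2.2.1 (mem_filter.mp hc).2.2.2,
    sum_const, smul_eq_mul, card_pow_two_pow_eq_self_ne_zero_ne_one hcard]

end TraceOverZModTwo

theorem stmt5_general (m k : ℕ) (hm : 4 ≤ m)
    (ℓ : ℕ) (hl : ℓ = Nat.gcd k m) :
    24 * (Finset.univ.filter (fun s : Finset (GaloisField 2 m) =>
        s.card = 4 ∧ (∀ x ∈ s, x ≠ 0 ∧ Tr m x = 1)
        ∧ (∑ x ∈ s, x) = 0 ∧ (∑ x ∈ s, x ^ (2 ^ k + 1)) = 0)).card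
      = 2 ^ (m - 1) * (2 ^ (m - 2) - 1) * (2 ^ ℓ - 2) := by
  -- `congr` only has to identify the decidability instances of the two filters.
  calc _ = 24 * #{s : Finset (GaloisField 2 m) | IsSolution k s} := by congr
    _ = #{t | PairwiseDistinct t ∧ IsSolution k (completeQuad t)} :=
      mul_card_eq_card_pairwiseDistinct _ fun s hs => ⟨hs.1, hs.2.2.1⟩
    _ = _ := by
      rw [card_pairwiseDistinct_isSolution, GaloisField.finrank 2 (by omega), hl]
      ring

/-- Count of 4-subsets of elements of trace one with vanishing sum and
vanishing `(2^k+1)`-power sum: `A_4^⊥ = 2^{m-1}(2^{m-2}-1)(2^ℓ-2)/4!`. -/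
theorem stmt5 (m k : ℕ) (hm : 4 ≤ m) (hk1 : 1 ≤ k) (hkm : k < m)
    (ℓ : ℕ) (hl : ℓ = Nat.gcd k m) :
    24 * (Finset.univ.filter (fun s : Finset (GaloisField 2 m) =>
        s.card = 4 ∧ (∀ x ∈ s, x ≠ 0 ∧ Tr m x = 1)
        ∧ (∑ x ∈ s, x) = 0 ∧ (∑ x ∈ s, x ^ (2 ^ k + 1)) = 0)).card
      = 2 ^ (m - 1) * (2 ^ (m - 2) - 1) * (2 ^ ℓ - 2) :=
  stmt5_general m k hm ℓ hl
end

section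
/- Let m be even, k a divisor of m with k ∉ {m, m/2}, and suppose v₂(m) > v₂(k) + 1 (where v₂ is the 2-adic valuation). Let f(x) = Tr_k^m(x^{2^k+1}) and W_f(a,b) = Σ_{x ∈ F_{2^m}} (-1)^{Tr(a f(x) + b x)}. Then for every a ∈ F_{2^m} with Tr_k^m(a) ≠ 0 and every b ∈ F_{2^m}, W_f(a,b)² ∈ {0, 2^{m+2k}}. -/
open Finset
open scoped Classical

/-!
Put `c = Tr_k^m(a)`. Moving Frobenius powers across the absolute trace gives
`Tr(a f(x)) = Tr(c x^(2^k+1))` with `c^(2^k) = c`, so `W_f(a,b)` is the character sum of the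
quadratic form `Q(x) = Tr(c x^(2^k+1) + b x)`. The square of such a sum is `2^m` times the sum of
`(-1)^Q` over the radical of the polar form of `Q`; `Q` is additive on the radical, so this sum is
`0` or the size of the radical. Since `c ≠ 0` is fixed by `x ↦ x^(2^k)`, the radical is
`{u | u^(2^(2k)) = u}`, a copy of `F_(2^(2k))` because the valuation hypothesis forces `2k ∣ m`.
-/

def signChar : AddChar (ZMod 2) ℤ where
  toFun s := (-1) ^ s.val
  map_zero_eq_one' := rfl
  map_add_eq_mul' := by decide

theorem signChar_eq_one_iff {s : ZMod 2} : signChar s = 1 ↔ s = 0 := by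
  revert s; decide

theorem signChar_mul_self (s : ZMod 2) : signChar s * signChar s = 1 := by
  revert s; decide

section CharacterSum

variable {G : Type*} [AddCommGroup G] [Fintype G]

theorem sum_signChar_eq_ite (ψ : G →+ ZMod 2) :
    ∑ x, signChar (ψ x) = if ψ = 0 then (Nat.card G : ℤ) else 0 := by
  have hψ : signChar.compAddMonoidHom ψ = 0 ↔ ψ = 0 := by
    rw [AddChar.eq_zero_iff, DFunLike.ext_iff]
    simp [signChar_eq_one_iff]
  simpa only [hψ, AddChar.compAddMonoidHom_apply, Nat.card_eq_fintype_card] using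
    AddChar.sum_eq_ite (signChar.compAddMonoidHom ψ)

theorem sq_sum_signChar_eq (Q : G → ZMod 2) (B : G →+ G →+ ZMod 2)
    (hQ : ∀ x u, Q (x + u) = Q x + Q u + B u x) :
    (∑ x, signChar (Q x)) ^ 2 = Nat.card G * ∑ u : B.ker, signChar (Q u) := by
  calc (∑ x, signChar (Q x)) ^ 2
      = ∑ x, ∑ u, signChar (Q x) * signChar (Q (x + u)) := by
        rw [sq, sum_mul_sum]
        exact sum_congr rfl fun x _ => (Fintype.sum_equiv (Equiv.addLeft x) _ _ fun _ => rfl).symm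
    _ = ∑ u, signChar (Q u) * ∑ x, signChar (B u x) := by
        rw [sum_comm]
        refine sum_congr rfl fun u _ => ?_
        rw [mul_sum]
        refine sum_congr rfl fun x _ => ?_
        rw [hQ, AddChar.map_add_eq_mul, AddChar.map_add_eq_mul, ← mul_assoc, ← mul_assoc,
          signChar_mul_self, one_mul]
    _ = ∑ u, if u ∈ B.ker then Nat.card G * signChar (Q u) else 0 := by
        refine sum_congr rfl fun u _ => ?_
        by_cases hu : B u = 0 <;> simp [sum_signChar_eq_ite, hu, mul_comm]
    _ = Nat.card G * ∑ u : B.ker, signChar (Q u) := by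
        rw [← sum_filter, mul_sum]
        exact sum_subtype _ (by simp) _

theorem sq_sum_signChar_mem (Q : G → ZMod 2) (B : G →+ G →+ ZMod 2)
    (hQ : ∀ x u, Q (x + u) = Q x + Q u + B u x) :
    (∑ x, signChar (Q x)) ^ 2 ∈ ({0, (Nat.card G : ℤ) * Nat.card B.ker} : Set ℤ) := by
  let ψ : B.ker →+ ZMod 2 := AddMonoidHom.mk' (fun u => Q u) fun u v => by
    simp [hQ, (AddMonoidHom.mem_ker).mp v.2]
  have hsum : ∑ u : B.ker, signChar (Q u) = if ψ = 0 then (Nat.card B.ker : ℤ) else 0 :=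
    sum_signChar_eq_ite ψ
  rw [sq_sum_signChar_eq Q B hQ, hsum]
  split_ifs <;> simp

end CharacterSum

theorem mul_dvd_of_padicValNat_lt {p k m : ℕ} [Fact p.Prime] (hkm : k ∣ m)
    (hv : padicValNat p k < padicValNat p m) : p * k ∣ m := by
  obtain ⟨n, rfl⟩ := hkm
  have hkn : k * n ≠ 0 := by rintro h; simp [h] at hv
  rw [padicValNat.mul (left_ne_zero_of_mul hkn) (right_ne_zero_of_mul hkn)] at hv
  rw [mul_comm p]
  exact mul_dvd_mul_left k (dvd_of_one_le_padicValNat (by omega))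

theorem pow_pow_eq_self_of_natCard_eq {K : Type*} [Field K] [Finite K] {p m : ℕ}
    (hK : Nat.card K = p ^ m) (x : K) : x ^ p ^ m = x := by
  have : Fintype K := Fintype.ofFinite K
  rw [← hK, Nat.card_eq_fintype_card]
  exact FiniteField.pow_card x

-- The relative trace `Tr_k^m` of `F_(p^m) / F_(p^k)`.
def relTrace {R : Type*} [Semiring R] (p k m : ℕ) (a : R) : R :=
  ∑ i ∈ range (m / k), a ^ p ^ (k * i)

section RelTrace

variable {R : Type*} [CommRing R] {p k m : ℕ} {a : R}

theorem relTrace_eq_sum_range_succ (hkm : k ∣ m) (ha : a ^ p ^ m = a) :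
    relTrace p k m a = ∑ i ∈ range (m / k), a ^ p ^ (k * (i + 1)) := by
  have hlast : a ^ p ^ (k * (m / k)) = a ^ p ^ (k * 0) := by
    rw [Nat.mul_div_cancel' hkm, ha, mul_zero, pow_zero, pow_one]
  have := (sum_range_succ (fun i => a ^ p ^ (k * i)) (m / k)).symm.trans
    (sum_range_succ' (fun i => a ^ p ^ (k * i)) (m / k))
  rw [hlast] at this
  exact add_right_cancel this

theorem relTrace_pow_pow_self [ExpChar R p] (hkm : k ∣ m) (ha : a ^ p ^ m = a) :
    relTrace p k m a ^ p ^ k = relTrace p k m a := by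
  calc relTrace p k m a ^ p ^ k = ∑ i ∈ range (m / k), a ^ p ^ (k * (i + 1)) := by
        rw [relTrace, sum_pow_char_pow]
        refine sum_congr rfl fun i _ => ?_
        rw [← pow_mul, ← pow_add, mul_add_one]
    _ = relTrace p k m a := (relTrace_eq_sum_range_succ hkm ha).symm

end RelTrace

section FiniteField

variable {p : ℕ} [Fact p.Prime] {K : Type*} [Field K] [Finite K] [Algebra (ZMod p) K]

open Polynomial in
theorem natCard_subtype_pow_pow_eq_self {d : ℕ} (hd0 : d ≠ 0)
    (hd : d ∣ Module.finrank (ZMod p) K) :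
    Nat.card {x : K // x ^ p ^ d = x} = p ^ d := by
  obtain ⟨φ⟩ := FiniteField.nonempty_algHom_of_finrank_dvd (K := GaloisField p d) (L := K)
    (by rwa [GaloisField.finrank p hd0])
  have hsplit : Splits ((X ^ p ^ d - X : (ZMod p)[X]).map (algebraMap (ZMod p) K)) :=
    (SplittingField.splits _).of_algHom φ
  have hroots : {x : K // x ^ p ^ d = x} ≃ (X ^ p ^ d - X : (ZMod p)[X]).rootSet K := by
    refine Equiv.subtypeEquivRight fun x => ?_
    rw [mem_rootSet_of_ne
      (FiniteField.X_pow_card_pow_sub_X_ne_zero _ hd0 (Fact.out : p.Prime).one_lt)]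
    simp [sub_eq_zero]
  rw [Nat.card_congr hroots, Nat.card_eq_fintype_card,
    card_rootSet_eq_natDegree (galois_poly_separable p _ (dvd_pow_self p hd0)) hsplit,
    FiniteField.X_pow_card_pow_sub_X_natDegree_eq _ hd0 (Fact.out : p.Prime).one_lt]

theorem trace_pow_pow (j : ℕ) (x : K) :
    Algebra.trace (ZMod p) K (x ^ p ^ j) = Algebra.trace (ZMod p) K x := by
  have :=
    Algebra.trace_eq_of_algEquiv (FiniteField.frobeniusAlgEquivOfAlgebraic (ZMod p) K ^ j) x
  rwa [AlgEquiv.coe_pow, FiniteField.coe_frobeniusAlgEquivOfAlgebraic_iterate, ZMod.card] at this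

theorem trace_mul_pow_pow {i j : ℕ} (hij : ∀ x : K, x ^ p ^ (i + j) = x) (a y : K) :
    Algebra.trace (ZMod p) K (a * y ^ p ^ i) = Algebra.trace (ZMod p) K (a ^ p ^ j * y) := by
  rw [← trace_pow_pow j, mul_pow, ← pow_mul, ← pow_add, hij]

theorem forall_trace_mul_pow_pow_eq_zero_iff (j : ℕ) (d : K) :
    (∀ x : K, Algebra.trace (ZMod p) K (d * x ^ p ^ j) = 0) ↔ d = 0 := by
  refine ⟨fun h => (traceForm_nondegenerate (ZMod p) K).1 d fun y => ?_, fun h x => by simp [h]⟩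
  obtain ⟨x, rfl⟩ := (FiniteField.frobeniusAlgEquivOfAlgebraic (ZMod p) K ^ j).surjective y
  rw [AlgEquiv.coe_pow, FiniteField.coe_frobeniusAlgEquivOfAlgebraic_iterate, ZMod.card]
  exact h x

theorem trace_mul_relTrace [CharP K p] {k m : ℕ} (hkm : k ∣ m) (hK : Nat.card K = p ^ m)
    (a y : K) :
    Algebra.trace (ZMod p) K (a * relTrace p k m y) =
      Algebra.trace (ZMod p) K (relTrace p k m a * y) := by
  have hpow := pow_pow_eq_self_of_natCard_eq hK
  have hm : k * (m / k) = m := Nat.mul_div_cancel' hkm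
  calc Algebra.trace (ZMod p) K (a * relTrace p k m y)
      = ∑ i ∈ range (m / k),
          Algebra.trace (ZMod p) K (a ^ p ^ (k * (m / k - 1 - i + 1)) * y) := by
        rw [relTrace, mul_sum, map_sum]
        refine sum_congr rfl fun i hi => trace_mul_pow_pow (fun x => ?_) a y
        rw [← mul_add, show i + (m / k - 1 - i + 1) = m / k by grind, hm, hpow]
    _ = ∑ i ∈ range (m / k), Algebra.trace (ZMod p) K (a ^ p ^ (k * (i + 1)) * y) :=
        sum_range_reflect (fun i => Algebra.trace (ZMod p) K (a ^ p ^ (k * (i + 1)) * y)) _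
    _ = Algebra.trace (ZMod p) K (relTrace p k m a * y) := by
        rw [relTrace_eq_sum_range_succ hkm (hpow a), sum_mul, map_sum]

end FiniteField

section QuadraticForm

variable {K : Type*} [Field K] [Algebra (ZMod 2) K] [CharP K 2]

noncomputable def polarForm (c : K) (k : ℕ) : K →+ K →+ ZMod 2 :=
  AddMonoidHom.mk' (fun u => AddMonoidHom.mk'
    (fun x => Algebra.trace (ZMod 2) K (c * (u * x ^ 2 ^ k + u ^ 2 ^ k * x)))
    fun x y => by rw [add_pow_char_pow, ← map_add]; ring_nf)
    fun u v => by ext x; simp only [AddMonoidHom.mk'_apply, AddMonoidHom.add_apply,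
      add_pow_char_pow, ← map_add]; ring_nf

theorem trace_quadratic_add (c b : K) (k : ℕ) (x u : K) :
    Algebra.trace (ZMod 2) K (c * (x + u) ^ (2 ^ k + 1) + b * (x + u)) =
      Algebra.trace (ZMod 2) K (c * x ^ (2 ^ k + 1) + b * x) +
        Algebra.trace (ZMod 2) K (c * u ^ (2 ^ k + 1) + b * u) + polarForm c k u x := by
  simp only [polarForm, AddMonoidHom.mk'_apply, ← map_add, pow_succ, add_pow_char_pow]
  ring_nf

theorem polarForm_apply [Finite K] {c : K} {k : ℕ} (hc : c ^ 2 ^ k = c) (u x : K) :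
    polarForm c k u x = Algebra.trace (ZMod 2) K (c * (u + u ^ 2 ^ (2 * k)) * x ^ 2 ^ k) := by
  simp only [polarForm, AddMonoidHom.mk'_apply, mul_add, add_mul, map_add]
  rw [← trace_pow_pow k (c * (u ^ 2 ^ k * x)), mul_pow, mul_pow, hc, ← pow_mul, ← pow_add,
    ← two_mul]
  ring_nf

theorem polarForm_eq_zero_iff [Finite K] {c : K} {k : ℕ} (hc0 : c ≠ 0) (hc : c ^ 2 ^ k = c)
    (u : K) :
    polarForm c k u = 0 ↔ u ^ 2 ^ (2 * k) = u := by
  rw [DFunLike.ext_iff]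
  simp only [polarForm_apply hc, AddMonoidHom.zero_apply]
  rw [forall_trace_mul_pow_pow_eq_zero_iff, mul_eq_zero, or_iff_right hc0, CharTwo.add_eq_zero,
    eq_comm]

end QuadraticForm

theorem stmt10_general (m k : ℕ) (hkm : k ∣ m) (hv : padicValNat 2 k + 1 < padicValNat 2 m)
    (f : GaloisField 2 m → GaloisField 2 m)
    (hf : ∀ x, f x = ∑ i ∈ Finset.range (m / k), (x ^ (2 ^ k + 1)) ^ 2 ^ (k * i)) :
    ∀ a b : GaloisField 2 m,
      (∑ i ∈ Finset.range (m / k), a ^ 2 ^ (k * i)) ≠ 0 →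
      (Walsh m f a b) ^ 2 ∈ ({0, 2 ^ (m + 2 * k)} : Set ℤ) := by
  intro a b hc
  have hm0 : m ≠ 0 := by rintro rfl; simp at hv
  have hk0 : k ≠ 0 := by rintro rfl; exact hm0 (zero_dvd_iff.mp hkm)
  have hK : Nat.card (GaloisField 2 m) = 2 ^ m := GaloisField.card 2 m hm0
  set c := relTrace 2 k m a
  have hcq : c ^ 2 ^ k = c := relTrace_pow_pow_self hkm (pow_pow_eq_self_of_natCard_eq hK a)
  have hW : Walsh m f a b =
      ∑ x, signChar (Algebra.trace (ZMod 2) _ (c * x ^ (2 ^ k + 1) + b * x)) := by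
    refine sum_congr rfl fun x _ => ?_
    rw [Tr, map_add, map_add, hf, ← trace_mul_relTrace hkm hK]
    rfl
  have hker : Nat.card (polarForm c k).ker = 2 ^ (2 * k) := by
    have h2k : 2 * k ∣ Module.finrank (ZMod 2) (GaloisField 2 m) := by
      rw [GaloisField.finrank 2 hm0]
      exact mul_dvd_of_padicValNat_lt hkm (by omega)
    rw [← natCard_subtype_pow_pow_eq_self (by omega) h2k]
    exact Nat.card_congr (Equiv.subtypeEquivRight (polarForm_eq_zero_iff hc hcq))
  have key := sq_sum_signChar_mem
    (fun x => Algebra.trace (ZMod 2) _ (c * x ^ (2 ^ k + 1) + b * x)) (polarForm c k)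
    (trace_quadratic_add c b k)
  rw [hK, hker] at key
  rw [hW, pow_add]
  exact_mod_cast key

/-- For `f(x) = Tr_k^m(x^{2^k+1})` with `v₂(m) > v₂(k)+1`, if `Tr_k^m(a) ≠ 0`
then `W_f(a,b)² ∈ {0, 2^{m+2k}}`. -/
theorem stmt10 (m k : ℕ) (hk : 0 < k) (hkm : k ∣ m) (hk1 : k ≠ m) (hk2 : k ≠ m / 2)
    (hm : Even m) (hv : padicValNat 2 k + 1 < padicValNat 2 m)
    (f : GaloisField 2 m → GaloisField 2 m)
    (hf : ∀ x, f x = ∑ i ∈ Finset.range (m / k), (x ^ (2 ^ k + 1)) ^ 2 ^ (k * i)) :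
    ∀ a b : GaloisField 2 m,
      (∑ i ∈ Finset.range (m / k), a ^ 2 ^ (k * i)) ≠ 0 →
      (Walsh m f a b) ^ 2 ∈ ({0, 2 ^ (m + 2 * k)} : Set ℤ) :=
  stmt10_general m k hkm hv f hf
end

section
/- Let m ≥ 2, f : F_{2^m} → F_{2^m}, and D = { x ∈ F_{2^m}* : Tr(x) = 1 }. For a, b ∈ F_{2^m}, let w(a,b) = |{ x ∈ D : Tr(a f(x) + b x) = 1 }|. Then w(a,b) = 2^{m-2} - (W_f(a,b) - W_f(a, b+1))/4, where W_f(a,b) = Σ_{x ∈ F_{2^m}} (-1)^{Tr(a f(x) + b x)}. -/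
open Finset
open scoped Classical

lemma chi_add (u v : ZMod 2) :
    (-1 : ℤ) ^ ((u + v).val) = (-1 : ℤ) ^ u.val * (-1 : ℤ) ^ v.val := by revert u v; decide

lemma Tr_add (m : ℕ) (u v : GaloisField 2 m) : Tr m (u + v) = Tr m u + Tr m v := by
  simp [Tr, map_add]

lemma Tr_zero (m : ℕ) : Tr m 0 = 0 := by simp [Tr]

lemma sum_chi_eq_zero (m : ℕ) (hm : m ≠ 0) :
    ∑ x : GaloisField 2 m, (-1 : ℤ) ^ (Tr m x).val = 0 := by
  obtain ⟨c, hc⟩ := Algebra.trace_surjective (K := ZMod 2) (L := GaloisField 2 m) 1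
  have hc1 : Tr m c = 1 := hc
  have h := Fintype.sum_equiv (Equiv.addRight c)
    (fun x => (-1 : ℤ) ^ (Tr m (x + c)).val)
    (fun x => (-1 : ℤ) ^ (Tr m x).val) (fun x => rfl)
  have h2 : ∑ x : GaloisField 2 m, (-1 : ℤ) ^ (Tr m (x + c)).val
      = ∑ x : GaloisField 2 m, (-1 : ℤ) ^ (Tr m x).val := by
    simpa using h
  have h3 : ∀ x : GaloisField 2 m,
      (-1 : ℤ) ^ (Tr m (x + c)).val = -((-1 : ℤ) ^ (Tr m x).val) := by
    intro x
    rw [Tr_add, chi_add, hc1]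
    norm_num [ZMod.val_one]
  rw [Finset.sum_congr rfl (fun x _ => h3 x), Finset.sum_neg_distrib] at h2
  linarith

lemma zmod2_cases (u : ZMod 2) : u = 0 ∨ u = 1 := by revert u; decide

/-- Codeword weight formula: `w(a,b) = 2^{m-2} - (W_f(a,b) - W_f(a,b+1))/4`,
stated multiplied through by 4. -/
theorem stmt15 (m : ℕ) (hm : 2 ≤ m) (f : GaloisField 2 m → GaloisField 2 m)
    (a b : GaloisField 2 m) :
    4 * ((Finset.univ.filter (fun x : GaloisField 2 m =>
        x ≠ 0 ∧ Tr m x = 1 ∧ Tr m (a * f x + b * x) = 1)).card : ℤ)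
      = 2 ^ m - (Walsh m f a b - Walsh m f a (b + 1)) := by
  have hm0 : m ≠ 0 := by omega
  set g : GaloisField 2 m → GaloisField 2 m := fun x => a * f x + b * x with hg
  have hcard : ((Finset.univ.filter (fun x : GaloisField 2 m =>
        x ≠ 0 ∧ Tr m x = 1 ∧ Tr m (a * f x + b * x) = 1)).card : ℤ)
      = ∑ x : GaloisField 2 m,
        (if x ≠ 0 ∧ Tr m x = 1 ∧ Tr m (g x) = 1 then (1 : ℤ) else 0) := by
    rw [Finset.card_filter]
    push_cast
    rfl
  have hpoint : ∀ x : GaloisField 2 m,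
      4 * (if x ≠ 0 ∧ Tr m x = 1 ∧ Tr m (g x) = 1 then (1 : ℤ) else 0)
      = (1 - (-1 : ℤ) ^ (Tr m x).val) * (1 - (-1 : ℤ) ^ (Tr m (g x)).val) := by
    intro x
    rcases zmod2_cases (Tr m x) with h1 | h1
    · have : ¬ (x ≠ 0 ∧ Tr m x = 1 ∧ Tr m (g x) = 1) := by
        rintro ⟨_, h, _⟩; rw [h1] at h; exact absurd h (by decide)
      rw [if_neg this, h1]
      norm_num
    · have hx0 : x ≠ 0 := by
        intro h; rw [h, Tr_zero] at h1; exact absurd h1 (by decide)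
      rcases zmod2_cases (Tr m (g x)) with h2 | h2
      · have : ¬ (x ≠ 0 ∧ Tr m x = 1 ∧ Tr m (g x) = 1) := by
          rintro ⟨_, _, h⟩; rw [h2] at h; exact absurd h (by decide)
        rw [if_neg this, h1, h2]
        norm_num
      · rw [if_pos ⟨hx0, h1, h2⟩, h1, h2]
        norm_num [ZMod.val_one]
  rw [hcard, Finset.mul_sum, Finset.sum_congr rfl (fun x _ => hpoint x)]
  have expand : ∀ x : GaloisField 2 m,
      (1 - (-1 : ℤ) ^ (Tr m x).val) * (1 - (-1 : ℤ) ^ (Tr m (g x)).val)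
      = 1 - (-1 : ℤ) ^ (Tr m x).val - (-1 : ℤ) ^ (Tr m (g x)).val
        + (-1 : ℤ) ^ (Tr m (x + g x)).val := by
    intro x
    have h := Tr_add m x (g x)
    rw [h, chi_add]
    ring
  rw [Finset.sum_congr rfl (fun x _ => expand x)]
  rw [Finset.sum_add_distrib, Finset.sum_sub_distrib, Finset.sum_sub_distrib]
  have hW1 : ∑ x : GaloisField 2 m, (-1 : ℤ) ^ (Tr m (g x)).val = Walsh m f a b := rfl
  have hW2 : ∑ x : GaloisField 2 m, (-1 : ℤ) ^ (Tr m (x + g x)).val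
      = Walsh m f a (b + 1) := by
    unfold Walsh
    apply Finset.sum_congr rfl
    intro x _
    congr 2
    simp only [hg]
    ring
  have hone : ∑ _x : GaloisField 2 m, (1 : ℤ) = 2 ^ m := by
    rw [Finset.sum_const, Finset.card_univ, nsmul_eq_mul, mul_one]
    have := GaloisField.card 2 m hm0
    rw [Nat.card_eq_fintype_card] at this
    rw [this]
    push_cast
    ring
  rw [hW1, hW2, hone, sum_chi_eq_zero m hm0]
  ring
end
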